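/- arXiv:1601.01990 — 2 statements merged into one kernel-verified Lean document; each statement's English description precedes it below -/
import Mathlib

section
/- Let A ∈ ℝ^{n×n} be invertible, Q = Qᵀ ∈ ℝ^{n×n}, R = Rᵀ ∈ ℝ^{m×m} invertible, and B ∈ ℝ^{n×m}. Then the matrix Z = [[A + B R⁻¹ Bᵀ A⁻ᵀ Q, −B R⁻¹ Bᵀ A⁻ᵀ], [−A⁻ᵀ Q, A⁻ᵀ]] is symplectic. -/
open Matrix

theorem Z_symplectic (n m : ℕ)
    (L : Matrix (Fin n ⊕ Fin n) (Fin n ⊕ Fin n) ℝ)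
    (hL : L = Matrix.fromBlocks 0 1 (-1) 0)
    (A Q : Matrix (Fin n) (Fin n) ℝ) (B : Matrix (Fin n) (Fin m) ℝ)
    (R : Matrix (Fin m) (Fin m) ℝ)
    (hA : IsUnit A) (hQ : Qᵀ = Q) (hR : IsUnit R) (hRs : Rᵀ = R)
    (Z : Matrix (Fin n ⊕ Fin n) (Fin n ⊕ Fin n) ℝ)
    (hZ : Z = Matrix.fromBlocks
      (A + B * R⁻¹ * Bᵀ * (Aᵀ)⁻¹ * Q) (-(B * R⁻¹ * Bᵀ * (Aᵀ)⁻¹))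
      (-((Aᵀ)⁻¹ * Q)) ((Aᵀ)⁻¹)) :
    Zᵀ * L * Z = L := by
  subst hL hZ
  have hAd : IsUnit A.det := (Matrix.isUnit_iff_isUnit_det A).mp hA
  have hATd : IsUnit Aᵀ.det := by rwa [Matrix.det_transpose]
  have h1 : Aᵀ * (Aᵀ)⁻¹ = 1 := Matrix.mul_nonsing_inv _ hATd
  have h2 : ((Aᵀ)⁻¹)ᵀ = A⁻¹ := by rw [Matrix.transpose_nonsing_inv, Matrix.transpose_transpose]
  have h3 : A⁻¹ * A = 1 := Matrix.nonsing_inv_mul _ hAd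
  have hRi : (R⁻¹)ᵀ = R⁻¹ := by rw [Matrix.transpose_nonsing_inv, hRs]
  have hG : (B * R⁻¹ * Bᵀ)ᵀ = B * R⁻¹ * Bᵀ := by
    simp only [Matrix.transpose_mul, Matrix.transpose_transpose, hRi, Matrix.mul_assoc]
  rw [Matrix.fromBlocks_transpose, Matrix.fromBlocks_multiply, Matrix.fromBlocks_multiply,
    Matrix.fromBlocks_inj]
  set G := B * R⁻¹ * Bᵀ with hGdef
  set S := (Aᵀ)⁻¹ with hSdef
  have hGS : (G * S)ᵀ = A⁻¹ * G := by rw [Matrix.transpose_mul, h2, hG]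
  have hSQ : (-(S * Q))ᵀ = -(Q * A⁻¹) := by rw [Matrix.transpose_neg, Matrix.transpose_mul, h2, hQ]
  have hZ1 : (A + G * S * Q)ᵀ = Aᵀ + Q * (A⁻¹ * G) := by
    rw [Matrix.transpose_add, Matrix.transpose_mul, Matrix.transpose_mul, h2, hG, hQ]
  refine ⟨?_, ?_, ?_, ?_⟩
  · rw [hZ1, hSQ]
    simp only [Matrix.mul_zero, Matrix.mul_one, zero_add, add_zero,
      Matrix.neg_mul, Matrix.mul_neg, neg_neg]
    rw [Matrix.mul_add, Matrix.mul_assoc Q A⁻¹ A, h3, Matrix.mul_one, Matrix.add_mul,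
      ← Matrix.mul_assoc Aᵀ S Q, h1, Matrix.one_mul]
    simp only [Matrix.mul_assoc]
    abel
  · rw [hZ1, hSQ]
    simp only [Matrix.mul_zero, Matrix.mul_one, zero_add, add_zero,
      Matrix.neg_mul, Matrix.mul_neg, neg_neg]
    rw [Matrix.add_mul, h1]
    simp only [Matrix.mul_assoc]
    abel
  · rw [Matrix.transpose_neg, hGS, h2]
    simp only [Matrix.mul_zero, Matrix.mul_one, zero_add, add_zero,
      Matrix.neg_mul, Matrix.mul_neg, neg_neg]
    rw [Matrix.mul_add, h3]
    simp only [Matrix.mul_assoc]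
    abel
  · rw [Matrix.transpose_neg, hGS, h2]
    simp only [Matrix.mul_zero, Matrix.mul_one, zero_add, add_zero,
      Matrix.neg_mul, Matrix.mul_neg, neg_neg]
    simp only [Matrix.mul_assoc]
    abel
end

section
/- Let A ∈ ℝ^{n×n} be invertible, Q = Qᵀ ∈ ℝ^{n×n}, R = Rᵀ ∈ ℝ^{m×m} invertible, and B ∈ ℝ^{n×m}. Then M = F⁻¹E = [[A⁻¹, A⁻¹ B R⁻¹ Bᵀ], [Q A⁻¹, Q A⁻¹ B R⁻¹ Bᵀ + Aᵀ]] is symplectic, where F = [[A, 0], [−Q, I]] and E = [[I, B R⁻¹ Bᵀ], [0, Aᵀ]]. -/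
open Matrix

theorem M_symplectic (n m : ℕ)
    (L : Matrix (Fin n ⊕ Fin n) (Fin n ⊕ Fin n) ℝ)
    (hL : L = Matrix.fromBlocks 0 1 (-1) 0)
    (A Q : Matrix (Fin n) (Fin n) ℝ) (B : Matrix (Fin n) (Fin m) ℝ)
    (R : Matrix (Fin m) (Fin m) ℝ)
    (hA : IsUnit A) (hQ : Qᵀ = Q) (hR : IsUnit R) (hRs : Rᵀ = R)
    (M : Matrix (Fin n ⊕ Fin n) (Fin n ⊕ Fin n) ℝ)
    (hM : M = Matrix.fromBlocks
      (A⁻¹) (A⁻¹ * B * R⁻¹ * Bᵀ)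
      (Q * A⁻¹) (Q * A⁻¹ * B * R⁻¹ * Bᵀ + Aᵀ)) :
    Mᵀ * L * M = L := by
  subst hL hM
  have hAdet : IsUnit A.det := (Matrix.isUnit_iff_isUnit_det A).mp hA
  have hA1 : A * A⁻¹ = 1 := Matrix.mul_nonsing_inv A hAdet
  have hAT1 : A⁻¹ᵀ * Aᵀ = 1 := by
    rw [← Matrix.transpose_mul, hA1, Matrix.transpose_one]
  have hRT : R⁻¹ᵀ = R⁻¹ := by
    rw [Matrix.transpose_nonsing_inv, hRs]
  have c1 : ∀ (C : Matrix (Fin n) (Fin n) ℝ), A * (A⁻¹ * C) = C := by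
    intro C; rw [← Matrix.mul_assoc, hA1, Matrix.one_mul]
  simp only [Matrix.fromBlocks_transpose, Matrix.fromBlocks_multiply,
    Matrix.transpose_mul, Matrix.transpose_transpose, Matrix.transpose_add,
    hQ, hRT]
  simp [Matrix.mul_assoc, Matrix.mul_add, Matrix.add_mul, hA1, hAT1, c1]
end
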